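/- arXiv:2001.04748 — 8 statements merged into one kernel-verified Lean document; each statement's English description precedes it below -/
import Mathlib

section
/- Let G and H be non-trivial groups and let H act faithfully on a set X such that H_X is of torsion-type. If H is finitely invariably generated and G is invariably generated but not finitely invariably generated, then the wreath product G ≀_X H is invariably generated but not finitely invariably generated. -/
open Function SemidirectProduct

/-- A subset `S` invariably generates `K` if replacing each element of `S` by an
arbitrary conjugate always yields a generating set of `K`. -/
def InvariablyGenerates (K : Type*) [Group K] (S : Set K) : Prop :=
  ∀ a : K → K, Subgroup.closure ((fun s => (a s)⁻¹ * s * a s) '' S) = ⊤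

/-- `K` is invariably generated if `K` invariably generates itself. -/
def IsIG (K : Type*) [Group K] : Prop :=
  InvariablyGenerates K Set.univ

/-- `K` is finitely invariably generated if some finite subset invariably generates it. -/
def IsFIG (K : Type*) [Group K] : Prop :=
  ∃ S : Set K, S.Finite ∧ InvariablyGenerates K S

/-- The base of the wreath product `G ≀_X H`: the restricted direct product
`⨁_{x ∈ X} G`, realized as the finitely supported functions `X → G`. -/
def WreathBase (G X : Type*) [Group G] : Subgroup (X → G) where
  carrier := {f | (mulSupport f).Finite}
  one_mem' := by simp
  mul_mem' {f g} hf hg := (Set.Finite.union hf hg).subset (mulSupport_mul f g)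
  inv_mem' {f} hf := by simpa using hf

lemma mem_wreathBase {G X : Type*} [Group G] {f : X → G} :
    f ∈ WreathBase G X ↔ (mulSupport f).Finite := Iff.rfl

/-- The permutation action of `H` on the base, `(h • f) x = f (h⁻¹ • x)`, so that in the
wreath product conjugation by `h` (i.e. `h · g^{(x)} · h⁻¹`) sends the coordinate subgroup
`G_x` to `G_{h • x}`; equivalently `h⁻¹ · g^{(x)} · h = g^{(h⁻¹ • x)}`, which is the
left-action rendering of "conjugation multiplies indices on the right". -/
def wreathAut (G H X : Type*) [Group G] [Group H] [MulAction H X] :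
    H →* MulAut (WreathBase G X) where
  toFun h :=
    { toFun := fun f => ⟨fun x => (f : X → G) (h⁻¹ • x),
        mem_wreathBase.mpr (((mem_wreathBase.mp f.2).image (h • ·)).subset
          fun x hx => ⟨h⁻¹ • x, hx, by simp⟩)⟩
      invFun := fun f => ⟨fun x => (f : X → G) (h • x),
        mem_wreathBase.mpr (((mem_wreathBase.mp f.2).image (h⁻¹ • ·)).subset
          fun x hx => ⟨h • x, hx, by simp⟩)⟩
      left_inv := fun f => Subtype.ext (funext fun x => by simp)
      right_inv := fun f => Subtype.ext (funext fun x => by simp)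
      map_mul' := fun f g => Subtype.ext (funext fun x => by simp) }
  map_one' := by
    ext f x
    simp
  map_mul' h₁ h₂ := by
    ext f x
    simp [mul_smul]

/-- The restricted wreath product `G ≀_X H`. -/
abbrev WreathProduct (G H X : Type*) [Group G] [Group H] [MulAction H X] :=
  WreathBase G X ⋊[wreathAut G H X] H

open scoped Classical in
/-- `g^{(y)}`: the element of the base which is `g` in coordinate `y` and trivial elsewhere. -/
noncomputable def WreathBase.single {G : Type*} (X : Type*) [Group G] (y : X) :
    G →* WreathBase G X where
  toFun g := ⟨fun x => if x = y then g else 1,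
    mem_wreathBase.mpr ((Set.finite_singleton y).subset fun x hx => by
      by_contra hxy
      exact hx (if_neg hxy))⟩
  map_one' := Subtype.ext (funext fun x => by simp)
  map_mul' g₁ g₂ := Subtype.ext (funext fun x => by by_cases h : x = y <;> simp [h])

/-- The embedding of `G` onto the coordinate subgroup `G_y` of the wreath product. -/
noncomputable def coordHom (G H : Type*) {X : Type*} [Group G] [Group H] [MulAction H X]
    (y : X) : G →* WreathProduct G H X :=
  SemidirectProduct.inl.comp (WreathBase.single X y)

/-- `H_X` is of torsion-type if there is `y ∈ X` such that for every `x` in the `H`-orbit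
of `y` and every `k ∈ H`, the `⟨k⟩`-orbit of `x` is finite. -/
def IsTorsionType (H X : Type*) [Group H] [MulAction H X] : Prop :=
  ∃ y : X, ∀ x ∈ MulAction.orbit H y, ∀ k : H, (Set.range fun n : ℤ => k ^ n • x).Finite

/-- A `Γ_z`-set: a set of base elements containing, for every `g ∈ G`, an element whose
coordinate at `z` is `g`. -/
def IsGammaSet {G X : Type*} [Group G] (z : X) (Γ : Set (WreathBase G X)) : Prop :=
  ∀ g : G, ∃ f ∈ Γ, (f : X → G) z = g

/-!
Invariable generation: the conjugates of a family indexed by all of `G ≀ H` map onto an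
invariable generating family of `H`, so every element of `H` lifts into their closure `K`.
Correcting by such lifts, each conjugate of a coordinate element `g^{(y)}` becomes a conjugate by
a base element, i.e. `(b⁻¹ g b)^{(y)}`; as `G` is invariably generated, `K` contains every
coordinate copy of `G`, hence the base, hence everything.

No finite invariable generation: given a finite `S ⊆ G ≀ H`, multiply the coordinates of each
`s ∈ S` around the finitely many finite `⟨s.right⟩`-cycles in the orbit `H • y` that meet its
support. These orbit products form a finite subset of `G`, so some choice of conjugates generates
a proper subgroup `M`. Conjugating each `s` by a finitely supported base element telescopes its
coordinates on `H • y` into `M`, so these conjugates of `S` lie in the proper subgroup of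
elements whose coordinates on `H • y` lie in `M`.
-/

open MulAction

lemma IsFIG.isIG {K : Type*} [Group K] (h : IsFIG K) : IsIG K := by
  obtain ⟨S, -, hS⟩ := h
  exact fun a => eq_top_iff.2 <|
    (hS a).ge.trans (Subgroup.closure_mono (Set.image_mono (Set.subset_univ S)))

lemma IsIG.map_closure_conj_eq_top {K L : Type*} [Group K] [Group L] (hL : IsIG L)
    (φ : K →* L) (hφ : Surjective φ) (a : K → K) :
    (Subgroup.closure ((fun s => (a s)⁻¹ * s * a s) '' Set.univ)).map φ = ⊤ := by
  rw [MonoidHom.map_closure, eq_top_iff, ← hL fun l => φ (a (surjInv hφ l))]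
  refine Subgroup.closure_mono ?_
  rintro _ ⟨l, -, rfl⟩
  exact ⟨_, ⟨surjInv hφ l, trivial, rfl⟩, by simp [surjInv_eq hφ]⟩

namespace WreathBase

variable {G X : Type*} [Group G]

open scoped Classical in
lemma single_apply (y : X) (g : G) (z : X) :
    ((single X y g : WreathBase G X) : X → G) z = if z = y then g else 1 :=
  rfl

lemma inv_mul_single_mul (b : WreathBase G X) (y : X) (g : G) :
    b⁻¹ * single X y g * b = single X y (((b : X → G) y)⁻¹ * g * (b : X → G) y) := by
  ext z
  by_cases hz : z = y <;> simp [single_apply, hz]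

lemma closure_iUnion_range_single :
    Subgroup.closure (⋃ y, Set.range (single X y : G → WreathBase G X)) = ⊤ := by
  set N := Subgroup.closure (⋃ y, Set.range (single X y : G → WreathBase G X))
  suffices ∀ (F : Finset X) (f : WreathBase G X), mulSupport (f : X → G) ⊆ F → f ∈ N from
    eq_top_iff.2 fun f _ => this _ f (mem_wreathBase.1 f.2).coe_toFinset.ge
  classical
  intro F
  induction F using Finset.induction_on with
  | empty =>
    intro f hf
    convert N.one_mem
    ext z
    simpa using notMem_mulSupport.1 fun hz => by simpa using hf hz
  | insert y F _ ih =>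
    intro f hf
    set g := (f : X → G) y
    rw [← mul_inv_cancel_left (single X y g) f]
    refine N.mul_mem (Subgroup.subset_closure (Set.mem_iUnion.2 ⟨y, g, rfl⟩)) (ih _ ?_)
    intro z hz
    by_cases hzy : z = y
    · simp [hzy, single_apply, g] at hz
    · have hfz : (f : X → G) z ≠ 1 := by simpa [single_apply, hzy] using hz
      simpa [hzy] using hf hfz

end WreathBase

namespace WreathProduct

variable {G H X : Type*} [Group G] [Group H] [MulAction H X]

open WreathBase

lemma exists_inl_conj_mem {K : Subgroup (WreathProduct G H X)} (hK : K.map rightHom = ⊤)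
    {w v : WreathProduct G H X} (h : v⁻¹ * w * v ∈ K) :
    ∃ b : WreathBase G X, (inl b)⁻¹ * w * inl b ∈ K := by
  obtain ⟨u, hu, hur⟩ : v.right⁻¹ ∈ K.map rightHom := hK ▸ Subgroup.mem_top _
  obtain ⟨b, hb⟩ : v * u ∈ (inl : WreathBase G X →* _).range := by
    rw [range_inl_eq_ker_rightHom, MonoidHom.mem_ker, map_mul]
    simp_all
  refine ⟨b, ?_⟩
  rw [hb]
  convert K.mul_mem (K.mul_mem (K.inv_mem hu) h) hu using 1
  group

lemma eq_top_of_map_rightHom_eq_top {K : Subgroup (WreathProduct G H X)}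
    (hK : K.map rightHom = ⊤) (hinl : ∀ b, inl b ∈ K) : K = ⊤ := by
  have hker : (rightHom : WreathProduct G H X →* H).ker ≤ K := by
    rw [← range_inl_eq_ker_rightHom]
    rintro _ ⟨b, rfl⟩
    exact hinl b
  simpa [hK, sup_eq_left.2 hker] using (K.comap_map_eq rightHom).symm

lemma isIG (hH : IsIG H) (hG : IsIG G) : IsIG (WreathProduct G H X) := by
  intro a
  set K := Subgroup.closure ((fun s => (a s)⁻¹ * s * a s) '' Set.univ)
  have hK : K.map rightHom = ⊤ := hH.map_closure_conj_eq_top rightHom rightHom_surjective a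
  have hsingle : ∀ (y : X) (g : G), inl (single X y g) ∈ K := by
    intro y
    have hconj (g : G) : ∃ b : G, inl (single X y (b⁻¹ * g * b)) ∈ K := by
      obtain ⟨b, hb⟩ := exists_inl_conj_mem hK
        (Subgroup.subset_closure ⟨inl (single X y g), trivial, rfl⟩ : _ ∈ K)
      refine ⟨(b : X → G) y, ?_⟩
      rwa [← map_inv, ← map_mul, ← map_mul, inv_mul_single_mul] at hb
    choose b hb using hconj
    have : ⊤ ≤ K.comap (coordHom G H y) :=
      (hG b).ge.trans ((Subgroup.closure_le _).2 (by rintro _ ⟨g, -, rfl⟩; exact hb g))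
    exact fun g => this (Subgroup.mem_top g)
  refine eq_top_of_map_rightHom_eq_top hK fun f => ?_
  have : Subgroup.closure (⋃ y, Set.range (single X y : G → WreathBase G X)) ≤ K.comap inl :=
    (Subgroup.closure_le _).2 (Set.iUnion_subset fun y => by rintro _ ⟨g, rfl⟩; exact hsingle y g)
  exact this (closure_iUnion_range_single (G := G) (X := X) ▸ Subgroup.mem_top f)

end WreathProduct

section CyclicOrbits

variable {H X : Type*} [Group H] [MulAction H X]

lemma range_zpow_smul_zpow_smul (k : H) (n : ℤ) (w : X) :
    (Set.range fun m : ℤ => k ^ m • k ^ n • w) = Set.range fun m : ℤ => k ^ m • w := by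
  ext z
  constructor
  · rintro ⟨m, rfl⟩
    exact ⟨m + n, by simp only [zpow_add, mul_smul]⟩
  · rintro ⟨m, rfl⟩
    exact ⟨m - n, by simp only [← mul_smul, ← zpow_add, sub_add_cancel]⟩

lemma exists_pow_smul_eq_zpow_smul {k : H} {z : X}
    (hfin : (Set.range fun n : ℤ => k ^ n • z).Finite) (m : ℤ) :
    ∃ i : ℕ, k ^ i • z = k ^ m • z := by
  obtain ⟨n₁, n₂, hn, hne⟩ :=
    not_injective_iff.1 fun hinj => Set.infinite_range_of_injective hinj hfin
  have hperiod : period k z ≠ 0 := by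
    intro h0
    have : k ^ (-n₂ + n₁) • z = z := by
      rw [zpow_add, mul_smul, hn, ← mul_smul, ← zpow_add, neg_add_cancel, zpow_zero, one_smul]
    rw [zpow_smul_eq_iff_period_dvd, h0, Nat.cast_zero, zero_dvd_iff] at this
    omega
  refine ⟨(m % period k z).toNat, ?_⟩
  rw [← zpow_natCast, Int.toNat_of_nonneg (Int.emod_nonneg _ (by exact_mod_cast hperiod)),
    zpow_mod_period_smul]

noncomputable def orbitRep (k : H) (z : X) : X :=
  (Quotient.mk (orbitRel (Subgroup.zpowers k) X) z).out

lemma orbitRep_zpow_smul (k : H) (n : ℤ) (z : X) : orbitRep k (k ^ n • z) = orbitRep k z :=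
  congrArg Quotient.out <| Quotient.sound ⟨⟨k ^ n, Subgroup.zpow_mem_zpowers k n⟩, rfl⟩

lemma orbitRep_smul (k : H) (z : X) : orbitRep k (k • z) = orbitRep k z := by
  simpa using orbitRep_zpow_smul k 1 z

lemma exists_zpow_smul_eq_orbitRep (k : H) (z : X) : ∃ n : ℤ, k ^ n • z = orbitRep k z := by
  obtain ⟨⟨g, hg⟩, hgz⟩ :=
    orbitRel_apply.1 (Quotient.mk_out (s := orbitRel (Subgroup.zpowers k) X) z)
  obtain ⟨n, rfl⟩ := Subgroup.mem_zpowers_iff.1 hg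
  exact ⟨n, hgz⟩

open scoped Classical in
/-- `0` if `z` never reaches `orbitRep k z`. -/
noncomputable def stepsToRep (k : H) (z : X) : ℕ :=
  if h : ∃ i : ℕ, k ^ i • z = orbitRep k z then Nat.find h else 0

lemma pow_stepsToRep_smul {k : H} {z : X} (h : ∃ i : ℕ, k ^ i • z = orbitRep k z) :
    k ^ stepsToRep k z • z = orbitRep k z := by
  classical
  rw [stepsToRep, dif_pos h]
  exact Nat.find_spec h

lemma stepsToRep_le {k : H} {z : X} {i : ℕ} (hi : k ^ i • z = orbitRep k z) :
    stepsToRep k z ≤ i := by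
  classical
  rw [stepsToRep, dif_pos ⟨i, hi⟩]
  exact Nat.find_le hi

lemma stepsToRep_eq_zero {k : H} {z : X} (hz : orbitRep k z = z) : stepsToRep k z = 0 :=
  Nat.le_zero.1 (stepsToRep_le (i := 0) (by simpa using hz.symm))

lemma stepsToRep_eq_succ {k : H} {z : X} (h : ∃ i : ℕ, k ^ i • z = orbitRep k z)
    (hz : orbitRep k z ≠ z) : stepsToRep k z = stepsToRep k (k • z) + 1 := by
  obtain ⟨j, hj⟩ : ∃ j, stepsToRep k z = j + 1 :=
    Nat.exists_eq_succ_of_ne_zero fun h0 => hz (by simpa [h0] using (pow_stepsToRep_smul h).symm)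
  have hkz : k ^ j • k • z = orbitRep k (k • z) := by
    rw [orbitRep_smul, ← pow_stepsToRep_smul h, hj, pow_succ, mul_smul]
  have hle : stepsToRep k z ≤ stepsToRep k (k • z) + 1 := by
    refine stepsToRep_le ?_
    rw [pow_succ, mul_smul, pow_stepsToRep_smul ⟨j, hkz⟩, orbitRep_smul]
  have := stepsToRep_le hkz
  omega

end CyclicOrbits

section OrbitProducts

variable {G H X : Type*} [Group G] [Group H] [MulAction H X]

noncomputable def prodToRep (f : X → G) (k : H) (z : X) : G :=
  ((List.range (stepsToRep k z)).map fun i => f (k ^ i • z)).prod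

lemma prodToRep_of_orbitRep_eq {f : X → G} {k : H} {z : X} (hz : orbitRep k z = z) :
    prodToRep f k z = 1 := by
  simp [prodToRep, stepsToRep_eq_zero hz]

lemma prodToRep_eq_mul {f : X → G} {k : H} {z : X} (h : ∃ i : ℕ, k ^ i • z = orbitRep k z)
    (hz : orbitRep k z ≠ z) : prodToRep f k z = f z * prodToRep f k (k • z) := by
  simp [prodToRep, stepsToRep_eq_succ h hz, List.prod_range_succ', pow_succ, mul_smul]

/-- The product of `f` once around the `⟨k⟩`-orbit of `z`, starting at `orbitRep k z`. -/
noncomputable def orbitProd (f : X → G) (k : H) (z : X) : G :=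
  f (orbitRep k z) * prodToRep f k (k • orbitRep k z)

lemma orbitProd_zpow_smul (f : X → G) (k : H) (n : ℤ) (z : X) :
    orbitProd f k (k ^ n • z) = orbitProd f k z := by
  simp only [orbitProd, orbitRep_zpow_smul]

lemma orbitProd_smul (f : X → G) (k : H) (z : X) : orbitProd f k (k • z) = orbitProd f k z := by
  simpa using orbitProd_zpow_smul f k 1 z

lemma exists_conj_mem_of_orbitProd {k : H} {f : X → G} (hf : (mulSupport f).Finite)
    (hfin : ∀ z ∈ mulSupport f, (Set.range fun n : ℤ => k ^ n • z).Finite)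
    (M : Subgroup G) (u : G → G)
    (hu : ∀ z ∈ mulSupport f, (u (orbitProd f k z))⁻¹ * orbitProd f k z * u (orbitProd f k z) ∈ M) :
    ∃ c : X → G, (mulSupport c).Finite ∧ ∀ z, (c z)⁻¹ * f z * c (k • z) ∈ M := by
  classical
  set Y := ⋃ w ∈ mulSupport f, Set.range fun n : ℤ => k ^ n • w
  have hY (z : X) : k • z ∈ Y ↔ z ∈ Y := by
    simp only [Y, Set.mem_iUnion, Set.mem_range]
    refine exists₂_congr fun w _ => ⟨fun ⟨n, hn⟩ => ⟨-1 + n, ?_⟩, fun ⟨n, hn⟩ => ⟨1 + n, ?_⟩⟩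
    · rw [zpow_add, zpow_neg_one, mul_smul, hn, inv_smul_smul]
    · rw [zpow_add, zpow_one, mul_smul, hn]
  -- On each cycle through the support the factors of `c⁻¹ f (c ∘ (k • ·))` cancel, except at
  -- `orbitRep`, where the `u`-conjugate of the orbit product is left over.
  refine ⟨fun z => if z ∈ Y then prodToRep f k z * u (orbitProd f k z) else 1,
    (hf.biUnion hfin).subset fun z hz => by_contra fun hzY => hz (if_neg hzY), fun z => ?_⟩
  by_cases hzY : z ∈ Y
  · simp only [if_pos hzY, if_pos ((hY z).2 hzY)]
    obtain ⟨w, hw, n, rfl⟩ : ∃ w ∈ mulSupport f, ∃ n : ℤ, k ^ n • w = z := by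
      simpa [Y] using hzY
    have hret : ∃ i : ℕ, k ^ i • k ^ n • w = orbitRep k (k ^ n • w) := by
      obtain ⟨m, hm⟩ := exists_zpow_smul_eq_orbitRep k (k ^ n • w)
      rw [← hm]
      exact exists_pow_smul_eq_zpow_smul (by rw [range_zpow_smul_zpow_smul]; exact hfin w hw) m
    have hP := hu w hw
    rw [← orbitProd_zpow_smul f k n w] at hP
    rw [orbitProd_smul]
    generalize k ^ n • w = z at hret hP
    by_cases hz : orbitRep k z = z
    · have hPz : orbitProd f k z = f z * prodToRep f k (k • z) := by rw [orbitProd, hz]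
      rw [prodToRep_of_orbitRep_eq hz, one_mul, hPz]
      rw [hPz] at hP
      simpa only [mul_assoc] using hP
    · rw [prodToRep_eq_mul hret hz]
      convert M.one_mem using 1
      group
  · have hfz : f z = 1 := by
      by_contra hfz
      exact hzY (Set.mem_biUnion hfz ⟨0, by simp⟩)
    simp [if_neg hzY, if_neg (mt (hY z).1 hzY), hfz]

end OrbitProducts

namespace WreathProduct

variable {G H X : Type*} [Group G] [Group H] [MulAction H X]

open WreathBase

lemma wreathAut_apply (k : H) (f : WreathBase G X) (z : X) :
    ((wreathAut G H X k f : WreathBase G X) : X → G) z = (f : X → G) (k⁻¹ • z) :=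
  rfl

lemma conj_inl_left_apply (c : WreathBase G X) (s : WreathProduct G H X) (x : X) :
    ((((inl c)⁻¹ * s * inl c).left : WreathBase G X) : X → G) x =
      ((c : X → G) x)⁻¹ * (s.left : X → G) x * (c : X → G) (s.right⁻¹ • x) := by
  simp [wreathAut_apply, mul_assoc]

def coordsMemSubgroup (Y : Set X) (hY : ∀ k : H, ∀ x ∈ Y, k • x ∈ Y) (M : Subgroup G) :
    Subgroup (WreathProduct G H X) where
  carrier := {w | ∀ x ∈ Y, (w.left : X → G) x ∈ M}
  one_mem' _ _ := M.one_mem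
  mul_mem' ha hb x hx := M.mul_mem (ha x hx) (hb _ (hY _ x hx))
  inv_mem' ha x hx := M.inv_mem (ha _ (hY _ x hx))

lemma not_isFIG (htt : IsTorsionType H X) (hG : ¬ IsFIG G) : ¬ IsFIG (WreathProduct G H X) := by
  rintro ⟨S, hSfin, hS⟩
  obtain ⟨y, htor⟩ := htt
  set Y := orbit H y
  set f : WreathProduct G H X → X → G := fun s => Y.mulIndicator (s.left : X → G)
  have hf (s : WreathProduct G H X) : (mulSupport (f s)).Finite := by
    simpa only [f, Set.mulSupport_mulIndicator] using (mem_wreathBase.1 s.left.2).inter_of_right Y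
  set T : Set G := ⋃ s ∈ S, orbitProd (f s) s.right⁻¹ '' mulSupport (f s)
  obtain ⟨u, hM⟩ : ∃ u : G → G, Subgroup.closure ((fun t => (u t)⁻¹ * t * u t) '' T) ≠ ⊤ := by
    by_contra! h
    exact hG ⟨T, hSfin.biUnion fun s _ => (hf s).image _, h⟩
  set M := Subgroup.closure ((fun t => (u t)⁻¹ * t * u t) '' T)
  set N := coordsMemSubgroup Y (fun k x hx => mem_orbit_of_mem_orbit k hx) M
  have hconj : ∀ s ∈ S, ∃ c : WreathBase G X, (inl c)⁻¹ * s * inl c ∈ N := by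
    intro s hs
    obtain ⟨c, hcfin, hc⟩ := exists_conj_mem_of_orbitProd (hf s)
      (fun z hz => htor z (Set.mulSupport_mulIndicator_subset hz) _) M u
      (fun z hz => Subgroup.subset_closure ⟨_, Set.mem_biUnion hs ⟨z, hz, rfl⟩, rfl⟩)
    refine ⟨⟨c, hcfin⟩, fun x hx => ?_⟩
    simpa [conj_inl_left_apply, wreathAut_apply, f, Set.mulIndicator_of_mem hx] using hc x
  choose! c hc using hconj
  have hN : ⊤ ≤ N := hS (fun s => inl (c s)) ▸
    (Subgroup.closure_le _).2 (by rintro _ ⟨s, hs, rfl⟩; exact hc s hs)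
  refine hM (eq_top_iff.2 fun g _ => ?_)
  simpa [single_apply] using hN (Subgroup.mem_top (inl (single X y g))) y (mem_orbit_self y)

end WreathProduct

theorem stmt_0_general (G H X : Type*) [Group G] [Group H]
    [MulAction H X] (htt : IsTorsionType H X)
    (hH : IsFIG H) (hG : IsIG G) (hG' : ¬ IsFIG G) :
    IsIG (WreathProduct G H X) ∧ ¬ IsFIG (WreathProduct G H X) :=
  ⟨WreathProduct.isIG hH.isIG hG, WreathProduct.not_isFIG htt hG'⟩

theorem stmt_0 (G H X : Type*) [Group G] [Group H] [Nontrivial G] [Nontrivial H]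
    [MulAction H X] [FaithfulSMul H X] (htt : IsTorsionType H X)
    (hH : IsFIG H) (hG : IsIG G) (hG' : ¬ IsFIG G) :
    IsIG (WreathProduct G H X) ∧ ¬ IsFIG (WreathProduct G H X) :=
  stmt_0_general G H X htt hH hG hG'
end

section
/- Let G and H be non-trivial groups and let H act faithfully on a set X such that H_X is of torsion-type. If H is invariably generated and G is not invariably generated, then the wreath product G ≀_X H is not invariably generated. -/
open Function SemidirectProduct

section AuxiliaryLemmas
variable {G H X : Type*} [Group G] [Group H] [MulAction H X]


@[simp] lemma wreathAut_apply_coe (h : H) (c : WreathBase G X) (x : X) :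
    (((wreathAut G H X h) c : WreathBase G X) : X → G) x = (c : X → G) (h⁻¹ • x) := rfl

lemma conj_left_apply (c : WreathBase G X) (w : WreathProduct G H X) (x : X) :
    (((inl c)⁻¹ * w * inl c).left : X → G) x
      = ((c : X → G) x)⁻¹ * (w.left : X → G) x * (c : X → G) (w.right⁻¹ • x) := by
  simp

lemma pow_smul_inj_aux (h : H) (z : X) {a b : ℕ}
    (hb : b < MulAction.period h z)
    (hab : h ^ a • z = h ^ b • z) (hle : a ≤ b) : a = b := by
  have e : h ^ a • (h ^ (b - a) • z) = h ^ a • z := by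
    rw [← mul_smul, ← pow_add, show a + (b - a) = b from by omega, hab]
  have e2 : h ^ (b - a) • z = z := smul_left_cancel _ e
  have hd := MulAction.pow_smul_eq_iff_period_dvd.mp e2
  rcases Nat.eq_zero_or_pos (b - a) with h0 | hpos
  · omega
  · have := Nat.le_of_dvd hpos hd; omega

lemma pow_smul_inj (h : H) (z : X) {a b : ℕ}
    (ha : a < MulAction.period h z) (hb : b < MulAction.period h z)
    (hab : h ^ a • z = h ^ b • z) : a = b := by
  rcases le_total a b with hle | hle
  · exact pow_smul_inj_aux h z hb hab hle
  · exact (pow_smul_inj_aux h z ha hab.symm hle).symm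

lemma period_pos_of_finite_zpow_orbit (h : H) (z : X)
    (hf : (Set.range fun n : ℤ => h ^ n • z).Finite) : 0 < MulAction.period h z := by
  have hni : ¬ Function.Injective (fun n : ℤ => h ^ n • z) := fun hinj =>
    Set.infinite_range_of_injective hinj hf
  rw [Function.not_injective_iff] at hni
  obtain ⟨i, j, hij, hne⟩ := hni
  have key : h ^ (-j + i) • z = z := by
    rw [zpow_add, mul_smul, hij, ← mul_smul, ← zpow_add, neg_add_cancel, zpow_zero, one_smul]
  have hd := MulAction.zpow_smul_eq_iff_period_dvd.mp key
  rcases Nat.eq_zero_or_pos (MulAction.period h z) with h0 | h0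
  · rw [h0] at hd; simp only [Int.natCast_zero, zero_dvd_iff] at hd; omega
  · exact h0

lemma smul_mem_orbit' {y x : X} (hx : x ∈ MulAction.orbit H y) (k : H) :
    k • x ∈ MulAction.orbit H y := by
  obtain ⟨g, rfl⟩ := hx
  rw [← mul_smul]
  exact MulAction.mem_orbit y (k * g)
end AuxiliaryLemmas

section Key
variable {G H X : Type*} [Group G] [Group H] [MulAction H X]

lemma key_conj (y : X) (h : H)
    (hfin : ∀ x ∈ MulAction.orbit H y, (Set.range fun n : ℤ => h ^ n • x).Finite)
    (K : Subgroup G) (hK : ∀ g : G, ∃ u : G, u⁻¹ * g * u ∈ K)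
    (f : WreathBase G X) :
    ∃ c : WreathBase G X, ∀ x ∈ MulAction.orbit H y,
      (((c : X → G) x)⁻¹ * (f : X → G) x * (c : X → G) (h⁻¹ • x)) ∈ K := by
  classical
  set F : X → G := (f : X → G) with hF
  have hS : (mulSupport F).Finite := f.2
  set orb : X → Set X := fun x => Set.range fun i : ℤ => h ^ i • x with horb
  have mem_orb : ∀ (x : X) (i : ℤ), h ^ i • x ∈ orb x := fun x i => ⟨i, rfl⟩
  have mem_orb_self : ∀ x, x ∈ orb x := fun x => ⟨0, by simp⟩
  have orb_eq : ∀ x x', x' ∈ orb x → orb x' = orb x := by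
    intro x x' hx'
    obtain ⟨i, hi⟩ := hx'
    simp only [] at hi
    ext t
    constructor
    · rintro ⟨j, hj⟩
      simp only [] at hj
      refine ⟨j + i, ?_⟩
      show h ^ (j + i) • x = t
      rw [zpow_add, mul_smul, hi, hj]
    · rintro ⟨j, hj⟩
      simp only [] at hj
      refine ⟨j - i, ?_⟩
      show h ^ (j - i) • x' = t
      rw [← hi, ← mul_smul, ← zpow_add, show j - i + i = j from by ring, hj]
  set rep : X → X := fun x =>
    if hs : (orb x).Nonempty then hs.some else y with hrepdef
  have rep_mem : ∀ x, rep x ∈ orb x := by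
    intro x
    have hne : (orb x).Nonempty := ⟨x, mem_orb_self x⟩
    simp only [hrepdef, dif_pos hne]
    exact hne.some_mem
  have rep_eq : ∀ x x', x' ∈ orb x → rep x' = rep x := by
    intro x x' hx'
    simp only [hrepdef]
    rw [orb_eq x x' hx']
  have orb_sub : ∀ x ∈ MulAction.orbit H y, orb x ⊆ MulAction.orbit H y := by
    intro x hx t ht
    obtain ⟨i, hi⟩ := ht
    simp only [] at hi
    rw [← hi]
    exact smul_mem_orbit' hx (h ^ i)
  set d : X → ℕ → G :=
    fun z i => Nat.rec (motive := fun _ => G) 1 (fun i acc => F (h ^ (i + 1) • z) * acc) i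
    with hd
  have d_zero : ∀ z, d z 0 = 1 := fun z => rfl
  have d_succ : ∀ z i, d z (i + 1) = F (h ^ (i + 1) • z) * d z i := fun z i => rfl
  set Q : X → G := fun z => F z * d z (MulAction.period h z - 1) with hQ
  set u : X → G := fun z => Classical.choose (hK (Q z)) with hu
  have hu_spec : ∀ z, (u z)⁻¹ * Q z * u z ∈ K := fun z => Classical.choose_spec (hK (Q z))
  set good : X → Prop :=
    fun x => x ∈ MulAction.orbit H y ∧ (orb x ∩ mulSupport F).Nonempty with hgood
  set idx : X → ℕ :=
    fun x => if hx : ∃ j : ℕ, h ^ j • rep x = x then Nat.find hx else 0 with hidx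
  set c : X → G := fun x => if good x then d (rep x) (idx x) * u (rep x) else 1 with hc
  have hcsupp : (mulSupport c).Finite := by
    have hsub : mulSupport c ⊆ ⋃ s ∈ mulSupport F ∩ MulAction.orbit H y, orb s := by
      intro x hx
      have hgx : good x := by
        by_contra hgx
        exact hx (by simp only [hc, if_neg hgx])
      obtain ⟨s, hs_orb, hs_supp⟩ := hgx.2
      refine Set.mem_biUnion ⟨hs_supp, orb_sub x hgx.1 hs_orb⟩ ?_
      rw [orb_eq x s hs_orb]
      exact mem_orb_self x
    refine Set.Finite.subset (Set.Finite.biUnion (hS.inter_of_left _) ?_) hsub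
    intro s hs
    exact hfin s hs.2
  refine ⟨⟨c, mem_wreathBase.mpr hcsupp⟩, ?_⟩
  intro x hx
  show (c x)⁻¹ * F x * c (h⁻¹ • x) ∈ K
  have hxin : h⁻¹ • x ∈ orb x := by
    have := mem_orb x (-1)
    rwa [zpow_neg_one] at this
  by_cases hmeet : (orb x ∩ mulSupport F).Nonempty
  · -- main case
    have hgx : good x := ⟨hx, hmeet⟩
    have hz_orb : rep x ∈ orb x := rep_mem x
    set z : X := rep x with hz
    have hz_orbHy : z ∈ MulAction.orbit H y := orb_sub x hx hz_orb
    have hn_pos : 0 < MulAction.period h z :=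
      period_pos_of_finite_zpow_orbit h z (hfin z hz_orbHy)
    set n : ℕ := MulAction.period h z with hn
    obtain ⟨jw, hjw_lt, hjw⟩ : ∃ j : ℕ, j < n ∧ h ^ j • z = x := by
      have hx_orbz : x ∈ orb z := by
        rw [orb_eq x z hz_orb]
        exact mem_orb_self x
      obtain ⟨i, hi⟩ := hx_orbz
      simp only [] at hi
      have h0 : (0 : ℤ) ≤ i % (n : ℤ) := Int.emod_nonneg i (by exact_mod_cast hn_pos.ne')
      have hlt : i % (n : ℤ) < (n : ℤ) := Int.emod_lt_of_pos i (by exact_mod_cast hn_pos)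
      refine ⟨(i % (n : ℤ)).toNat, by omega, ?_⟩
      rw [← zpow_natCast, Int.toNat_of_nonneg h0, hn, MulAction.zpow_mod_period_smul, hi]
    have idx_eq : ∀ (t : X) (j' : ℕ), j' < n → h ^ j' • z = t → rep t = z → idx t = j' := by
      intro t j' hj' hjt hrt
      have hext : ∃ j'' : ℕ, h ^ j'' • rep t = t := ⟨j', by rw [hrt, hjt]⟩
      have hidxt : idx t = Nat.find hext := by
        simp only [hidx]
        rw [dif_pos hext]
      rw [hidxt]
      have hfind_le : Nat.find hext ≤ j' := Nat.find_le (by rw [hrt, hjt])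
      have hfs : h ^ Nat.find hext • z = t := by
        rw [← hrt]
        exact Nat.find_spec hext
      exact pow_smul_inj h z (by rw [← hn]; omega) (by rw [← hn]; omega) (by rw [hfs, hjt])
    have hrep' : rep (h⁻¹ • x) = z := by
      rw [hz]
      exact rep_eq x _ hxin
    have hgood' : good (h⁻¹ • x) :=
      ⟨smul_mem_orbit' hx h⁻¹, by rw [orb_eq x _ hxin]; exact hmeet⟩
    have hrx : rep x = z := hz.symm
    have hidx_x : idx x = jw := idx_eq x jw hjw_lt hjw hrx
    have hcx : c x = d z jw * u z := by
      simp only [hc, if_pos hgx, hidx_x, hrx]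
    have hQz : Q z = F z * d z (n - 1) := by
      simp only [hQ]
      try rw [← hn]
    rcases jw with _ | i
    · -- jw = 0 : x = z, collect orbit product
      have hxz : x = z := by simpa using hjw.symm
      have hpred : h ^ (n - 1) • z = h⁻¹ • x := by
        have e : h • (h ^ (n - 1) • z) = h • (h⁻¹ • x) := by
          rw [smul_inv_smul, ← mul_smul, ← pow_succ',
            show n - 1 + 1 = n from by omega, hn, MulAction.pow_period_smul, hxz]
        exact smul_left_cancel h e
      have hidx' : idx (h⁻¹ • x) = n - 1 := idx_eq _ (n - 1) (by omega) hpred hrep'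
      have hcx' : c (h⁻¹ • x) = d z (n - 1) * u z := by
        simp only [hc, if_pos hgood', hidx', hrep']
      rw [hcx, hcx']
      have e2 : (d z 0 * u z)⁻¹ * F x * (d z (n - 1) * u z) = (u z)⁻¹ * Q z * u z := by
        rw [d_zero, hxz, hQz]
        group
      rw [e2]
      exact hu_spec z
    · -- jw = i+1 : telescoping, value 1
      have hpred : h ^ i • z = h⁻¹ • x := by
        have e : h • (h ^ i • z) = h • (h⁻¹ • x) := by
          rw [smul_inv_smul, ← mul_smul, ← pow_succ', hjw]
        exact smul_left_cancel h e
      have hidx' : idx (h⁻¹ • x) = i := idx_eq _ i (by omega) hpred hrep'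
      have hcx' : c (h⁻¹ • x) = d z i * u z := by
        simp only [hc, if_pos hgood', hidx', hrep']
      rw [hcx, hcx']
      have hFx : F x = F (h ^ (i + 1) • z) := by rw [hjw]
      have e2 : (d z (i + 1) * u z)⁻¹ * F x * (d z i * u z) = 1 := by
        rw [hFx, d_succ]
        group
      rw [e2]
      exact K.one_mem
  · -- orbit misses support : everything trivial
    have hFx : F x = 1 := by
      by_contra hFx
      exact hmeet ⟨x, mem_orb_self x, hFx⟩
    have hcx : c x = 1 := by
      have hng : ¬ good x := fun hg => hmeet hg.2
      simp only [hc, if_neg hng]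
    have hcx' : c (h⁻¹ • x) = 1 := by
      have hng : ¬ good (h⁻¹ • x) := by
        intro hg
        exact hmeet (by rw [← orb_eq x _ hxin]; exact hg.2)
      simp only [hc, if_neg hng]
    rw [hcx, hFx, hcx']
    simpa using K.one_mem
end Key

theorem stmt_1 (G H X : Type*) [Group G] [Group H] [Nontrivial G] [Nontrivial H]
    [MulAction H X] [FaithfulSMul H X] (htt : IsTorsionType H X)
    (hH : IsIG H) (hG : ¬ IsIG G) :
    ¬ IsIG (WreathProduct G H X) := by
  classical
  intro hW
  obtain ⟨y, hfin⟩ := htt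
  rw [IsIG, InvariablyGenerates] at hG
  push_neg at hG
  obtain ⟨a, hKne⟩ := hG
  set K : Subgroup G := Subgroup.closure ((fun s => (a s)⁻¹ * s * a s) '' Set.univ) with hK
  have hKmem : ∀ g : G, ∃ u : G, u⁻¹ * g * u ∈ K := fun g =>
    ⟨a g, Subgroup.subset_closure ⟨g, Set.mem_univ g, rfl⟩⟩
  set M : Subgroup (WreathProduct G H X) :=
    { carrier := {w | ∀ x ∈ MulAction.orbit H y, ((w.left : X → G)) x ∈ K}
      one_mem' := fun x _ => K.one_mem
      mul_mem' := by
        intro w w' hw hw' x hx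
        have e : ((w * w').left : X → G) x
            = (w.left : X → G) x * (w'.left : X → G) (w.right⁻¹ • x) := rfl
        rw [e]
        exact K.mul_mem (hw x hx) (hw' _ (smul_mem_orbit' hx _))
      inv_mem' := by
        intro w hw x hx
        have e : ((w⁻¹).left : X → G) x = (((w.left : X → G)) ((w.right⁻¹)⁻¹ • x))⁻¹ := rfl
        show ((w⁻¹).left : X → G) x ∈ K
        rw [e, inv_inv]
        exact K.inv_mem (hw _ (smul_mem_orbit' hx _)) } with hM
  have hconj : ∀ w : WreathProduct G H X, ∃ b : WreathProduct G H X, b⁻¹ * w * b ∈ M := by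
    intro w
    obtain ⟨c, hc⟩ := key_conj y w.right (fun x hx => hfin x hx w.right) K hKmem w.left
    refine ⟨inl c, ?_⟩
    intro x hx
    show ((((inl c)⁻¹ * w * inl c).left : WreathBase G X) : X → G) x ∈ K
    rw [conj_left_apply]
    exact hc x hx
  obtain ⟨g0, hg0⟩ : ∃ g0 : G, g0 ∉ K := by
    by_contra hall
    push_neg at hall
    exact hKne ((Subgroup.eq_top_iff' K).mpr hall)
  set A : WreathProduct G H X → WreathProduct G H X := fun w => Classical.choose (hconj w)
    with hA
  have htop := hW A
  have hle : Subgroup.closure ((fun s => (A s)⁻¹ * s * A s) '' Set.univ) ≤ M := by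
    rw [Subgroup.closure_le]
    rintro _ ⟨w, -, rfl⟩
    exact Classical.choose_spec (hconj w)
  rw [htop, top_le_iff] at hle
  have hmem : coordHom G H y g0 ∈ M := by
    rw [hle]
    exact Subgroup.mem_top _
  have := hmem y (MulAction.mem_orbit_self y)
  apply hg0
  simpa [coordHom, WreathBase.single] using this
end

section
/- Let G and H be non-trivial groups and let H act faithfully on a set X. If H is not invariably generated, then G ≀_X H is not invariably generated. -/
open Function SemidirectProduct

theorem stmt_11 (G H X : Type*) [Group G] [Group H] [Nontrivial G] [Nontrivial H]
    [MulAction H X] [FaithfulSMul H X] (hH : ¬ IsIG H) :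
    ¬ IsIG (WreathProduct G H X) := by
  intro hW
  apply hH
  intro a
  by_contra hne
  have hW' := hW (fun w => inr (a (rightHom w)))
  have hsurj : Function.Surjective (rightHom :
      WreathProduct G H X →* H) := fun h => ⟨inr h, rightHom_inr h⟩
  have hmap := congrArg (Subgroup.map (rightHom : WreathProduct G H X →* H)) hW'
  rw [MonoidHom.map_closure, ← MonoidHom.range_eq_map,
    MonoidHom.range_eq_top_of_surjective _ hsurj] at hmap
  apply hne
  rw [eq_top_iff, ← hmap, Subgroup.closure_le]
  rintro x ⟨_, ⟨w, -, rfl⟩, rfl⟩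
  rw [SetLike.mem_coe]
  apply Subgroup.subset_closure
  exact ⟨rightHom w, Set.mem_univ _, by simp⟩
end

section
/- Let G and H be non-trivial groups and let H act faithfully on a set X. If the wreath product G ≀_X H is finitely generated, then G is finitely generated, H is finitely generated, and there exist finitely many points y₁, …, y_d ∈ X whose H-orbits cover X (i.e., y₁H ∪ … ∪ y_dH = X). -/
open Function SemidirectProduct

section Aux
variable {G H X : Type*} [Group G] [Group H] [MulAction H X]

/-- Elements of the wreath product whose base support lies in an `H`-invariant set `Y`. -/
def suppSubgroup (Y : Set X) (hY : ∀ (h : H) x, x ∈ Y → h • x ∈ Y) :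
    Subgroup (WreathProduct G H X) where
  carrier := {w | mulSupport (w.left : X → G) ⊆ Y}
  one_mem' := by
    intro x hx
    simp [Set.mem_setOf_eq, mulSupport] at hx
  mul_mem' := by
    intro a b ha hb x hx
    rw [SemidirectProduct.mul_left] at hx
    have hx' : (a.left : X → G) x * (b.left : X → G) (a.right⁻¹ • x) ≠ 1 := hx
    by_cases h1 : (a.left : X → G) x = 1
    · rw [h1, one_mul] at hx'
      have := hb hx'
      have := hY a.right _ this
      simpa using this
    · exact ha h1
  inv_mem' := by
    intro a ha x hx
    rw [SemidirectProduct.inv_left] at hx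
    have hx' : ((a.left : X → G) (a.right⁻¹⁻¹ • x))⁻¹ ≠ 1 := hx
    have : (a.left : X → G) (a.right • x) ≠ 1 := by simpa using hx'
    have := hY a.right⁻¹ _ (ha this)
    simpa using this

/-- Elements of the wreath product all of whose base values lie in a subgroup `K ≤ G`. -/
def valSubgroup (K : Subgroup G) : Subgroup (WreathProduct G H X) where
  carrier := {w | ∀ x, (w.left : X → G) x ∈ K}
  one_mem' := by
    intro x
    simpa using K.one_mem
  mul_mem' := by
    intro a b ha hb x
    rw [SemidirectProduct.mul_left]
    exact K.mul_mem (ha x) (hb _)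
  inv_mem' := by
    intro a ha x
    rw [SemidirectProduct.inv_left]
    exact K.inv_mem (ha _)

end Aux

theorem stmt_12 (G H X : Type*) [Group G] [Group H] [Nontrivial G] [Nontrivial H]
    [MulAction H X] [FaithfulSMul H X] (hfg : Group.FG (WreathProduct G H X)) :
    Group.FG G ∧ Group.FG H ∧
      ∃ s : Finset X, ∀ x : X, ∃ y ∈ s, x ∈ MulAction.orbit H y := by
  obtain ⟨S, hS, hSfin⟩ := Group.fg_iff.mp hfg
  -- X is nonempty, since H is nontrivial and acts faithfully
  have hX : Nonempty X := by
    by_contra h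
    rw [not_nonempty_iff] at h
    obtain ⟨h1, h2, hne⟩ := exists_pair_ne H
    exact hne (FaithfulSMul.eq_of_smul_eq_smul (fun x : X => (h.elim x)))
  obtain ⟨y⟩ := hX
  -- G is finitely generated
  have hGfg : Group.FG G := by
    set V : Set G := ⋃ w ∈ S, Set.range ((w.left : X → G)) with hV
    have hVfin : V.Finite := by
      refine Set.Finite.biUnion hSfin (fun w _ => ?_)
      have : Set.range ((w.left : X → G)) ⊆
          insert 1 ((w.left : X → G) '' mulSupport (w.left : X → G)) := by
        rintro g ⟨x, rfl⟩
        by_cases hx : (w.left : X → G) x = 1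
        · exact hx ▸ Set.mem_insert _ _
        · exact Set.mem_insert_of_mem _ ⟨x, hx, rfl⟩
      exact (((mem_wreathBase.mp w.left.2).image _).insert 1).subset this
    have hle : (⊤ : Subgroup (WreathProduct G H X)) ≤
        valSubgroup (Subgroup.closure V) := by
      rw [← hS]
      refine (Subgroup.closure_le _).mpr ?_
      intro w hw x
      exact Subgroup.subset_closure (Set.mem_biUnion hw ⟨x, rfl⟩)
    refine Group.fg_iff.mpr ⟨V, ?_, hVfin⟩
    rw [eq_top_iff]
    intro g _
    have := hle (Subgroup.mem_top (coordHom G H y g)) y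
    simpa [coordHom, WreathBase.single] using this
  -- H is finitely generated
  have hHfg : Group.FG H := by
    have : Function.Surjective (rightHom : WreathProduct G H X →* H) :=
      rightHom_surjective
    exact Group.fg_of_surjective this
  refine ⟨hGfg, hHfg, ?_⟩
  -- finitely many orbits cover X
  set U : Set X := ⋃ w ∈ S, mulSupport ((w.left : X → G)) with hU
  have hUfin : U.Finite :=
    Set.Finite.biUnion hSfin (fun w _ => mem_wreathBase.mp w.left.2)
  set Y : Set X := {x | ∃ y ∈ U, x ∈ MulAction.orbit H y} with hY
  have hYinv : ∀ (h : H) x, x ∈ Y → h • x ∈ Y := by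
    rintro h x ⟨z, hz, k, rfl⟩
    exact ⟨z, hz, h * k, by simp [mul_smul]⟩
  have hle : (⊤ : Subgroup (WreathProduct G H X)) ≤ suppSubgroup Y hYinv := by
    rw [← hS]
    refine (Subgroup.closure_le _).mpr ?_
    intro w hw x hx
    exact ⟨x, Set.mem_biUnion hw hx, 1, one_smul _ _⟩
  refine ⟨hUfin.toFinset, fun x => ?_⟩
  obtain ⟨g, hg⟩ := exists_ne (1 : G)
  have hmem := hle (Subgroup.mem_top (coordHom G H x g))
  have hx : x ∈ mulSupport ((coordHom G H x g).left : X → G) := by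
    simpa [coordHom, WreathBase.single] using hg
  obtain ⟨z, hz, hxz⟩ := hmem hx
  exact ⟨z, hUfin.mem_toFinset.mpr hz, hxz⟩
end

section
/- Let G and H be non-trivial groups, let H act faithfully on a set X, and let {y_i : i ∈ I} ⊆ X satisfy X = ⋃_{i∈I} y_iH. Let S_H be a subset of H that invariably generates H, and for each s ∈ S_H choose an arbitrary element a_s ∈ G ≀_X H; set S_H' := {a_s⁻¹·s·a_s : s ∈ S_H}. Then the subgroup of G ≀_X H generated by (⋃_{i∈I} G_{y_i}) ∪ S_H' is all of G ≀_X H. -/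
open Function SemidirectProduct

section Aux

variable {G H X : Type*} [Group G] [Group H] [MulAction H X]

open scoped Classical in
lemma wreathBase_single_coe (y : X) (g : G) (x : X) :
    ((WreathBase.single X y g : WreathBase G X) : X → G) x =
      if x = y then g else 1 := rfl

lemma wreathBase_coe_mul (f g : WreathBase G X) (x : X) :
    ((f * g : WreathBase G X) : X → G) x = (f : X → G) x * (g : X → G) x := rfl

lemma wreathBase_coe_inv (f : WreathBase G X) (x : X) :
    ((f⁻¹ : WreathBase G X) : X → G) x = ((f : X → G) x)⁻¹ := rfl

lemma wreathAut_coe (h : H) (f : WreathBase G X) (x : X) :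
    ((wreathAut G H X h f : WreathBase G X) : X → G) x = (f : X → G) (h⁻¹ • x) := rfl

lemma wreathAut_single (h : H) (y : X) (g : G) :
    wreathAut G H X h (WreathBase.single X y g) =
      WreathBase.single X (h • y) g := by
  classical
  refine Subtype.ext (funext fun x => ?_)
  rw [wreathAut_coe, wreathBase_single_coe, wreathBase_single_coe]
  simp only [inv_smul_eq_iff]

lemma wreathBase_conj_single (f : WreathBase G X) (x : X) (g : G) :
    f * WreathBase.single X x g * f⁻¹ =
      WreathBase.single X x ((f : X → G) x * g * ((f : X → G) x)⁻¹) := by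
  classical
  refine Subtype.ext (funext fun z => ?_)
  rw [wreathBase_coe_mul, wreathBase_coe_mul, wreathBase_coe_inv,
    wreathBase_single_coe, wreathBase_single_coe]
  by_cases hz : z = x
  · subst hz; simp
  · simp [hz]

/-- Every element of the base lies in any subgroup containing all the singles. -/
lemma wreathBase_mem_of_singles {W : Type*} [Group W] (φ : WreathBase G X →* W)
    (C : Subgroup W) (hC : ∀ (x : X) (g : G), φ (WreathBase.single X x g) ∈ C)
    (b : WreathBase G X) : φ b ∈ C := by
  classical
  obtain ⟨s, hs⟩ : ∃ s : Finset X, Function.mulSupport (b : X → G) ⊆ ↑s :=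
    ⟨(mem_wreathBase.mp b.2).toFinset, by simp⟩
  induction s using Finset.induction_on generalizing b with
  | empty =>
      have : b = 1 := Subtype.ext (funext fun z => by
        by_contra hz
        exact absurd (hs hz) (by simp))
      rw [this, map_one]
      exact one_mem C
  | @insert x s hx ih =>
      set c : WreathBase G X := (WreathBase.single X x ((b : X → G) x))⁻¹ * b with hc
      have hcs : Function.mulSupport (c : X → G) ⊆ ↑s := by
        intro z hz
        rw [Function.mem_mulSupport] at hz
        rw [hc, wreathBase_coe_mul, wreathBase_coe_inv, wreathBase_single_coe] at hz
        by_cases hzx : z = x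
        · subst hzx; simp at hz
        · rw [if_neg hzx, inv_one, one_mul] at hz
          have := hs (Function.mem_mulSupport.mpr hz)
          simpa [hzx] using this
      have hb : b = WreathBase.single X x ((b : X → G) x) * c := by
        rw [hc]; group
      rw [hb, map_mul]
      exact mul_mem (hC x _) (ih c hcs)

end Aux

theorem stmt_13 (G H X : Type*) [Group G] [Group H] [Nontrivial G] [Nontrivial H]
    [MulAction H X] [FaithfulSMul H X] {I : Type*} (y : I → X)
    (hcover : ∀ x : X, ∃ i : I, x ∈ MulAction.orbit H (y i))
    (S_H : Set H) (hS : InvariablyGenerates H S_H)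
    (a : H → WreathProduct G H X) :
    Subgroup.closure
        ((⋃ i : I, (((coordHom G H (y i)).range : Subgroup (WreathProduct G H X)) :
            Set (WreathProduct G H X))) ∪
          ((fun s => (a s)⁻¹ * inr s * a s) '' S_H)) = ⊤ := by
  classical
  set T : Set (WreathProduct G H X) :=
    (⋃ i : I, (((coordHom G H (y i)).range : Subgroup (WreathProduct G H X)) :
        Set (WreathProduct G H X))) ∪
      ((fun s => (a s)⁻¹ * inr s * a s) '' S_H) with hT
  set C : Subgroup (WreathProduct G H X) := Subgroup.closure T with hC
  -- coordinate subgroups at the y i are in C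
  have hsingle_yi : ∀ (i : I) (g : G), inl (WreathBase.single X (y i) g) ∈ C := by
    intro i g
    refine Subgroup.subset_closure (Or.inl ?_)
    exact Set.mem_iUnion.mpr ⟨i, ⟨g, rfl⟩⟩
  -- C surjects onto H
  have hmap : Subgroup.map (rightHom : WreathProduct G H X →* H) C = ⊤ := by
    rw [hC, MonoidHom.map_closure]
    rw [eq_top_iff, ← hS fun s => rightHom (a s)]
    refine Subgroup.closure_mono ?_
    rintro - ⟨s, hs, rfl⟩
    refine ⟨(a s)⁻¹ * inr s * a s, Or.inr ⟨s, hs, rfl⟩, ?_⟩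
    simp [rightHom_inr]
  have hsurj : ∀ h : H, ∃ w ∈ C, rightHom w = h := by
    intro h
    have : h ∈ Subgroup.map (rightHom : WreathProduct G H X →* H) C := by
      rw [hmap]; trivial
    rcases this with ⟨w, hw, hwh⟩
    exact ⟨w, hw, hwh⟩
  -- all coordinate subgroups are in C
  have hsingle : ∀ (x : X) (g : G), inl (WreathBase.single X x g) ∈ C := by
    intro x g
    obtain ⟨i, h, rfl⟩ := hcover x
    obtain ⟨w, hw, hwh⟩ := hsurj h
    set f : WreathBase G X := w.left with hf
    have hwdec : w = inl f * inr h := by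
      rw [hf, ← hwh]; exact (inl_left_mul_inr_right w).symm
    set v : WreathBase G X := WreathBase.single X (y i)
        (((f : X → G) (h • y i))⁻¹ * g * (f : X → G) (h • y i)) with hv
    have key : w * inl v * w⁻¹ = inl (WreathBase.single X (h • y i) g) := by
      rw [hwdec, mul_inv_rev,
        ← map_inv (inr : H →* WreathProduct G H X),
        ← map_inv (inl : WreathBase G X →* WreathProduct G H X)]
      calc inl f * inr h * inl v * (inr h⁻¹ * inl f⁻¹)
          = inl f * (inr h * inl v * inr h⁻¹) * inl f⁻¹ := by group
        _ = inl f * inl (wreathAut G H X h v) * inl f⁻¹ := by rw [← inl_aut]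
        _ = inl (f * wreathAut G H X h v * f⁻¹) := by rw [map_mul, map_mul]
        _ = inl (WreathBase.single X (h • y i) g) := by
            rw [hv, wreathAut_single, wreathBase_conj_single]
            congr 1
            group
    have hvmem : w * inl v * w⁻¹ ∈ C := by
      rw [hv]
      exact mul_mem (mul_mem hw (hsingle_yi i _)) (inv_mem hw)
    rwa [key] at hvmem
  -- the whole base is in C
  have hbase : ∀ b : WreathBase G X, inl b ∈ C := fun b =>
    wreathBase_mem_of_singles (inl : WreathBase G X →* WreathProduct G H X) C hsingle b
  -- conclude
  rw [eq_top_iff]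
  intro w _
  obtain ⟨u, hu, huh⟩ := hsurj (rightHom w)
  have hker : rightHom (w * u⁻¹) = 1 := by
    rw [map_mul, map_inv, huh, mul_inv_cancel]
  have : w * u⁻¹ ∈ (inl : WreathBase G X →* WreathProduct G H X).range := by
    rw [range_inl_eq_ker_rightHom]
    exact hker
  obtain ⟨b, hb⟩ := this
  have : w = inl b * u := by rw [hb]; group
  rw [this]
  exact mul_mem (hbase b) hu
end

section
/- Let G and H be non-trivial groups, let H act faithfully on a set X, let y ∈ X and k ∈ H be such that the ⟨k⟩-orbit C := y⟨k⟩ of y is finite. Let u be an element of the base supported on C and let v be an element of the base supported on X ∖ C. Then the element u·v·k of G ≀_X H is conjugate in G ≀_X H to u_*·v·k for some u_* ∈ G_y. -/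
open Function SemidirectProduct

theorem stmt_15 (G H X : Type*) [Group G] [Group H] [Nontrivial G] [Nontrivial H]
    [MulAction H X] [FaithfulSMul H X] (y : X) (k : H)
    (hC : (Set.range fun n : ℤ => k ^ n • y).Finite)
    (u v : WreathBase G X)
    (hu : Function.mulSupport (u : X → G) ⊆ Set.range fun n : ℤ => k ^ n • y)
    (hv : ∀ x ∈ Set.range fun n : ℤ => k ^ n • y, (v : X → G) x = 1) :
    ∃ uStar : G,
      IsConj (inl (u * v) * inr k : WreathProduct G H X)
        (inl (WreathBase.single X y uStar * v) * inr k) := by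
  classical
  set f : ℤ → X := fun n => k ^ n • y with hfdef
  -- f is not injective, so y has a positive period
  have hnotinj : ¬ Function.Injective f := fun hinj =>
    (Set.infinite_range_of_injective hinj) hC
  have hper : ∃ n : ℕ, 0 < n ∧ k ^ (n : ℤ) • y = y := by
    simp only [Function.Injective, not_forall] at hnotinj
    obtain ⟨a, b, hab, hne⟩ := hnotinj
    have key : ∀ c : ℤ, k ^ c • y = y → ∀ m : ℕ, c = m → 0 < m →
        ∃ n : ℕ, 0 < n ∧ k ^ (n : ℤ) • y = y := by
      intro c hc m hm hm0
      exact ⟨m, hm0, by rw [← hm]; exact hc⟩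
    have hba : k ^ (a - b) • y = y := by
      have h2 : k ^ (-b) • f a = k ^ (-b) • f b := congrArg _ hab
      simp only [hfdef, smul_smul, ← zpow_add] at h2
      rw [show -b + a = a - b by ring, show -b + b = 0 by ring, zpow_zero, one_smul] at h2
      exact h2
    rcases lt_or_gt_of_ne hne with h | h
    · have hba' : k ^ (b - a) • y = y := by
        have h2 := congrArg (fun z => k ^ (b - a) • z) hba
        simp only [smul_smul, ← zpow_add] at h2
        rw [show b - a + (a - b) = 0 by ring, zpow_zero, one_smul] at h2
        exact h2.symm
      exact key _ hba' (b - a).toNat (Int.toNat_of_nonneg (by omega)).symm (by omega)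
    · exact key _ hba (a - b).toNat (Int.toNat_of_nonneg (by omega)).symm (by omega)
  set d : ℕ := Nat.find hper with hddef
  obtain ⟨hd0, hdy⟩ : 0 < d ∧ k ^ (d : ℤ) • y = y := Nat.find_spec hper
  have hmin : ∀ m : ℕ, m < d → ¬(0 < m ∧ k ^ (m : ℤ) • y = y) := fun m hm => Nat.find_min hper hm
  -- multiples of d fix y
  have hstab : ∀ q : ℤ, k ^ ((d : ℤ) * q) • y = y := by
    intro q
    have h : k ^ (d : ℤ) ∈ MulAction.stabilizer H y := hdy
    have h2 := zpow_mem h q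
    rw [← zpow_mul] at h2
    exact h2
  -- every point of the orbit is k^i • y for some i < d
  have hrep : ∀ n : ℤ, ∃ i : ℕ, i < d ∧ k ^ (i : ℤ) • y = k ^ n • y := by
    intro n
    have h0 : (0:ℤ) ≤ n % d := Int.emod_nonneg n (by exact_mod_cast hd0.ne')
    have h1 : n % d < d := Int.emod_lt_of_pos n (by exact_mod_cast hd0)
    refine ⟨(n % d).toNat, by omega, ?_⟩
    rw [Int.toNat_of_nonneg h0]
    conv_rhs => rw [show n = n % d + d * (n / d) by rw [add_comm]; exact (Int.mul_ediv_add_emod n d).symm]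
    rw [zpow_add, mul_smul, hstab]
  -- injectivity on [0, d)
  have hinj2 : ∀ i j : ℕ, i < d → j < d → k ^ (i : ℤ) • y = k ^ (j : ℤ) • y → i = j := by
    have key : ∀ i j : ℕ, i ≤ j → j < d → k ^ (i : ℤ) • y = k ^ (j : ℤ) • y → i = j := by
      intro i j hij hj he
      by_contra hne
      have hji : k ^ ((j - i : ℕ) : ℤ) • y = y := by
        have h2 : k ^ (-(i:ℤ)) • k ^ (i:ℤ) • y = k ^ (-(i:ℤ)) • k ^ (j:ℤ) • y := congrArg _ he
        simp only [smul_smul, ← zpow_add] at h2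
        rw [show -(i:ℤ) + i = 0 by ring, zpow_zero, one_smul] at h2
        rw [show ((j - i : ℕ) : ℤ) = -(i:ℤ) + j by omega]
        exact h2.symm
      exact hmin (j - i) (by omega) ⟨by omega, hji⟩
    intro i j hi hj he
    rcases le_total i j with h | h
    · exact key i j h hj he
    · exact (key j i h hi he.symm).symm
  -- the telescoping conjugator
  set g : ℕ → G := fun j => ((u : X → G) (k ^ ((j : ℤ) + 1) • y))⁻¹ with hgdef
  set P : ℕ → G := fun i => ((List.range i).map g).prod with hPdef
  have hPsucc : ∀ m : ℕ, P (m + 1) = P m * g m := fun m => List.prod_range_succ g m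
  set w : X → G := fun x =>
    if h : ∃ i : ℕ, i < d ∧ k ^ (i : ℤ) • y = x then P (Nat.find h)
    else 1 with hwdef
  have wval : ∀ i : ℕ, i < d → w (k ^ (i : ℤ) • y) = P i := by
    intro i hi
    have h : ∃ i' : ℕ, i' < d ∧ k ^ (i' : ℤ) • y = k ^ (i : ℤ) • y := ⟨i, hi, rfl⟩
    rw [hwdef]
    simp only [dif_pos h]
    have hs := Nat.find_spec h
    rw [hinj2 _ _ hs.1 hi hs.2]
  have wzero : ∀ x : X, x ∉ Set.range f → w x = 1 := by
    intro x hx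
    rw [hwdef]
    refine dif_neg ?_
    rintro ⟨i, hi, he⟩
    exact hx ⟨(i : ℤ), he⟩
  have hwmem : w ∈ WreathBase G X := by
    refine mem_wreathBase.mpr (hC.subset ?_)
    intro x hx
    by_contra hxr
    exact hx (wzero x hxr)
  set W : WreathBase G X := ⟨w, hwmem⟩ with hWdef
  refine ⟨(u : X → G) y * (P (d - 1))⁻¹, ?_⟩
  rw [isConj_iff]
  refine ⟨inl W, ?_⟩
  set uStar : G := (u : X → G) y * (P (d - 1))⁻¹ with hudef
  have hbase : W * (u * v) * (wreathAut G H X) k W⁻¹ =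
      WreathBase.single X y uStar * v := by
    apply Subtype.ext
    funext x
    have hlhs : ((W * (u * v) * (wreathAut G H X) k W⁻¹ : WreathBase G X) : X → G) x =
        w x * ((u : X → G) x * (v : X → G) x) * (w (k⁻¹ • x))⁻¹ := rfl
    have hrhs : ((WreathBase.single X y uStar * v : WreathBase G X) : X → G) x =
        (if x = y then uStar else 1) * (v : X → G) x := rfl
    rw [hlhs, hrhs]
    by_cases hx : ∃ i : ℕ, i < d ∧ k ^ (i : ℤ) • y = x
    · obtain ⟨i, hi, rfl⟩ := hx
      have hvx : (v : X → G) (k ^ (i : ℤ) • y) = 1 := hv _ ⟨(i : ℤ), rfl⟩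
      rw [hvx, mul_one, wval i hi]
      rcases Nat.eq_zero_or_pos i with rfl | hipos
      · -- x = y
        have hxy : k ^ ((0:ℕ) : ℤ) • y = y := by simp
        rw [if_pos hxy]
        have hk1 : k⁻¹ • (k ^ ((0:ℕ) : ℤ) • y) = k ^ ((d - 1 : ℕ) : ℤ) • y := by
          rw [smul_smul, ← zpow_neg_one, ← zpow_add]
          conv_lhs => rw [show (-1 + ((0:ℕ):ℤ)) = ((d - 1 : ℕ) : ℤ) + (d : ℤ) * (-1) by
            push_cast [Nat.cast_sub hd0]; ring]
          rw [zpow_add, mul_smul, hstab]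
        rw [hk1, wval _ (by omega)]
        simp [hPdef, hudef, hxy]
      · -- x = k^i y with i > 0, so x ≠ y
        obtain ⟨m, rfl⟩ : ∃ m, i = m + 1 := ⟨i - 1, by omega⟩
        have hxny : ¬(k ^ ((m + 1 : ℕ) : ℤ) • y = y) := by
          intro he
          have h0 : (m + 1 : ℕ) = 0 := hinj2 _ _ hi (by omega) (by simpa using he)
          omega
        rw [if_neg hxny, one_mul]
        have hk1 : k⁻¹ • (k ^ ((m + 1 : ℕ) : ℤ) • y) = k ^ ((m : ℕ) : ℤ) • y := by
          rw [smul_smul, ← zpow_neg_one, ← zpow_add]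
          congr 2
          push_cast
          ring
        rw [hk1, wval _ (by omega), hPsucc]
        simp only [hgdef]
        push_cast
        group
    · -- x is not in the orbit
      have hxC : x ∉ Set.range f := by
        rintro ⟨n, rfl⟩
        obtain ⟨i, hi, he⟩ := hrep n
        exact hx ⟨i, hi, he⟩
      have hux : (u : X → G) x = 1 := by
        by_contra h
        exact hxC (hu h)
      have hwx : w x = 1 := wzero x hxC
      have hwkx : w (k⁻¹ • x) = 1 := by
        refine wzero _ ?_
        rintro ⟨n, hn⟩
        refine hxC ⟨n + 1, ?_⟩
        have h2 : k • f n = x := by rw [hn, smul_inv_smul]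
        show f (n + 1) = x
        rw [← h2]
        simp only [hfdef]
        rw [smul_smul, show (n:ℤ) + 1 = 1 + n from add_comm n 1, zpow_one_add]
      have hxny : ¬(x = y) := by
        intro he
        exact hxC ⟨0, by simp [hfdef, he]⟩
      rw [hux, hwx, hwkx, if_neg hxny]
      simp
  have hcomm : (inl ((wreathAut G H X) k W⁻¹) * inr k : WreathProduct G H X)
      = inr k * inl W⁻¹ := by
    rw [inl_aut]
    simp only [map_inv]
    group
  calc inl W * (inl (u * v) * inr k) * (inl W)⁻¹
      = inl W * inl (u * v) * (inr k * inl W⁻¹) := by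
        rw [map_inv]; group
    _ = inl W * inl (u * v) * (inl ((wreathAut G H X) k W⁻¹) * inr k) := by rw [hcomm]
    _ = inl (W * (u * v) * (wreathAut G H X) k W⁻¹) * inr k := by
        rw [← mul_assoc, ← map_mul, ← map_mul]
    _ = _ := by rw [hbase]
end

section
/- Let G and H be non-trivial groups, let H act faithfully on a set X, let y ∈ X and k ∈ H be such that the ⟨k⟩-orbit C := y⟨k⟩ of y is finite. Then for every u, g ∈ G and every element v of the base supported on X ∖ C, the element u^{(y)}·v·k of G ≀_X H is conjugate in G ≀_X H to (g⁻¹ug)^{(y)}·v·k. -/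
open Function SemidirectProduct

theorem stmt_16 (G H X : Type*) [Group G] [Group H] [Nontrivial G] [Nontrivial H]
    [MulAction H X] [FaithfulSMul H X] (y : X) (k : H)
    (hC : (Set.range fun n : ℤ => k ^ n • y).Finite)
    (u g : G) (v : WreathBase G X)
    (hv : ∀ x ∈ Set.range fun n : ℤ => k ^ n • y, (v : X → G) x = 1) :
    IsConj (inl (WreathBase.single X y u * v) * inr k : WreathProduct G H X)
      (inl (WreathBase.single X y (g⁻¹ * u * g) * v) * inr k) := by
  classical
  set C : Set X := Set.range fun n : ℤ => k ^ n • y with hCdef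
  have hyC : y ∈ C := ⟨0, by simp⟩
  have hmem : ∀ x : X, k⁻¹ • x ∈ C ↔ x ∈ C := by
    intro x
    constructor
    · rintro ⟨n, hn⟩
      have hn' : k ^ n • y = k⁻¹ • x := hn
      refine ⟨1 + n, ?_⟩
      show k ^ (1 + n) • y = x
      rw [zpow_add, zpow_one, mul_smul, hn']
      simp
    · rintro ⟨n, hn⟩
      have hn' : k ^ n • y = x := hn
      refine ⟨-1 + n, ?_⟩
      show k ^ (-1 + n) • y = k⁻¹ • x
      rw [zpow_add, mul_smul, hn', zpow_neg_one]
  have hwfin : (mulSupport fun x : X => if x ∈ C then g else 1).Finite := by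
    refine hC.subset fun x hx => ?_
    by_contra hxC
    exact hx (if_neg hxC)
  set w : WreathBase G X := ⟨fun x => if x ∈ C then g else 1, hwfin⟩ with hw
  rw [isConj_iff]
  refine ⟨(inl w : WreathProduct G H X)⁻¹, ?_⟩
  have hswap : (inr k : WreathProduct G H X) * inl w = inl (wreathAut G H X k w) * inr k := by
    rw [inl_aut]
    simp [mul_assoc]
  have key : w⁻¹ * (WreathBase.single X y u * v) * (wreathAut G H X k w)
      = WreathBase.single X y (g⁻¹ * u * g) * v := by
    refine Subtype.ext (funext fun x => ?_)
    have hvw : ((wreathAut G H X k w : WreathBase G X) : X → G) x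
        = if x ∈ C then g else 1 := by
      show (if k⁻¹ • x ∈ C then g else 1) = _
      by_cases hxC : x ∈ C
      · rw [if_pos ((hmem x).mpr hxC), if_pos hxC]
      · rw [if_neg (fun h => hxC ((hmem x).mp h)), if_neg hxC]
    have hwx : ((w : WreathBase G X) : X → G) x = if x ∈ C then g else 1 := rfl
    have hsx : ∀ a : G, ((WreathBase.single X y a : WreathBase G X) : X → G) x
        = if x = y then a else 1 := fun a => rfl
    simp only [Subgroup.coe_mul, InvMemClass.coe_inv, Pi.mul_apply, Pi.inv_apply,
      hvw, hwx, hsx]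
    by_cases hxy : x = y
    · subst hxy
      rw [hv x hyC, if_pos hyC, if_pos rfl, if_pos rfl]
      group
    · rw [if_neg hxy, if_neg hxy]
      by_cases hxC : x ∈ C
      · rw [if_pos hxC, hv x hxC]
        group
      · rw [if_neg hxC]
        group
  rw [inv_inv, ← map_inv, mul_assoc, mul_assoc, hswap]
  simp only [← mul_assoc]
  rw [← map_mul, ← map_mul, key]
end

section
/- Let G and H be non-trivial groups and let H act faithfully on a set X. Let S_H be a subset of H that invariably generates H, let {y_i : i ∈ I} ⊆ X satisfy X = ⋃_{i∈I} y_iH, and for each i ∈ I let 𝒢_i be a generating set of the coordinate subgroup G_{y_i}, let z_i ∈ y_iH, and let Γ_i be a Γ_{z_i}-set. For each s ∈ S_H ∪ ⋃_i 𝒢_i choose an arbitrary conjugator a_s ∈ G ≀_X H, and write S_H' := {a_s⁻¹·s·a_s : s ∈ S_H} and 𝒢_i' := {a_g⁻¹·g·a_g : g ∈ 𝒢_i}. Then the subgroup of G ≀_X H generated by S_H' ∪ ⋃_{i∈I}(𝒢_i' ∪ Γ_i) is all of G ≀_X H. -/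
open Function SemidirectProduct

section Helpers

open scoped Classical

variable {G H X : Type*} [Group G] [Group H] [MulAction H X]

lemma aut_single (h : H) (z : X) (a : G) :
    wreathAut G H X h (WreathBase.single X z a) = WreathBase.single X (h • z) a := by
  apply Subtype.ext; funext x
  show (if h⁻¹ • x = z then a else 1) = if x = h • z then a else 1
  by_cases hx : x = h • z <;> simp [hx, inv_smul_eq_iff]

lemma base_conj_single (b : WreathBase G X) (z : X) (a : G) :
    b * WreathBase.single X z a * b⁻¹ =
      WreathBase.single X z ((b : X → G) z * a * ((b : X → G) z)⁻¹) := by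
  apply Subtype.ext; funext x
  show (b : X → G) x * (if x = z then a else 1) * ((b : X → G) x)⁻¹
      = if x = z then (b : X → G) z * a * ((b : X → G) z)⁻¹ else 1
  by_cases hx : x = z <;> simp [hx]

lemma conj_inl (w : WreathProduct G H X) (f : WreathBase G X) :
    w * inl f * w⁻¹ = inl (w.left * wreathAut G H X w.right f * w.left⁻¹) := by
  ext <;>
    simp [mul_left, mul_right, inv_left, inv_right, map_mul, mul_assoc]

lemma conj_inl_single (w : WreathProduct G H X) (z : X) (a : G) :
    w * inl (WreathBase.single X z a) * w⁻¹ =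
      inl (WreathBase.single X (w.right • z)
        ((w.left : X → G) (w.right • z) * a * ((w.left : X → G) (w.right • z))⁻¹)) := by
  rw [conj_inl, aut_single, base_conj_single]

lemma conj_inl_single' (w : WreathProduct G H X) (z : X) (g : G) :
    w * inl (WreathBase.single X z
        (((w.left : X → G) (w.right • z))⁻¹ * g * (w.left : X → G) (w.right • z))) * w⁻¹ =
      inl (WreathBase.single X (w.right • z) g) := by
  rw [conj_inl_single]
  exact congrArg _ (congrArg _ (by group))

lemma inl_base_mem (K : Subgroup (WreathProduct G H X))
    (hsingle : ∀ (x : X) (g : G), (inl (WreathBase.single X x g) : WreathProduct G H X) ∈ K)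
    (f : WreathBase G X) : (inl f : WreathProduct G H X) ∈ K := by
  have main : ∀ s : Finset X, ∀ f : WreathBase G X,
      mulSupport (f : X → G) ⊆ ↑s → (inl f : WreathProduct G H X) ∈ K := by
    intro s
    induction s using Finset.induction_on with
    | empty =>
      intro f hf
      have : f = 1 := Subtype.ext (funext fun u => by
        by_contra hu
        simpa using hf hu)
      rw [this, map_one]
      exact K.one_mem
    | @insert a s ha ih =>
      intro f hf
      have hf' : mulSupport (((WreathBase.single X a ((f : X → G) a))⁻¹ * f :
          WreathBase G X) : X → G) ⊆ ↑s := by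
        intro u hu
        have hval : (((WreathBase.single X a ((f : X → G) a))⁻¹ * f :
            WreathBase G X) : X → G) u = (if u = a then (f : X → G) a else 1)⁻¹ * (f : X → G) u := rfl
        by_cases hua : u = a
        · exfalso
          apply hu
          rw [hval, if_pos hua, hua, inv_mul_cancel]
        · have hfu : (f : X → G) u ≠ 1 := by
            intro h0
            exact hu (by rw [hval, if_neg hua, h0, mul_one, inv_one])
          have := hf hfu
          simp only [Finset.coe_insert, Set.mem_insert_iff] at this
          rcases this with h | h
          · exact absurd h hua
          · exact h
      have hmem := K.mul_mem (hsingle a ((f : X → G) a))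
        (ih ((WreathBase.single X a ((f : X → G) a))⁻¹ * f) hf')
      rwa [← map_mul, mul_inv_cancel_left] at hmem
  exact main (mem_wreathBase.mp f.2).toFinset f (by simp)

end Helpers
theorem stmt_18 (G H X : Type*) [Group G] [Group H] [Nontrivial G] [Nontrivial H]
    [MulAction H X] [FaithfulSMul H X]
    (S_H : Set H) (hS : InvariablyGenerates H S_H)
    {I : Type*} (y : I → X)
    (hcover : ∀ x : X, ∃ i : I, x ∈ MulAction.orbit H (y i))
    (𝒢 : I → Set G) (h𝒢 : ∀ i : I, Subgroup.closure (𝒢 i) = ⊤)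
    (z : I → X) (hz : ∀ i : I, z i ∈ MulAction.orbit H (y i))
    (Γ : I → Set (WreathBase G X)) (hΓ : ∀ i : I, IsGammaSet (z i) (Γ i))
    (aS : H → WreathProduct G H X) (aG : I → G → WreathProduct G H X) :
    Subgroup.closure
        (((fun s => (aS s)⁻¹ * inr s * aS s) '' S_H) ∪
          ⋃ i : I,
            ((fun g => (aG i g)⁻¹ * coordHom G H (y i) g * aG i g) '' 𝒢 i) ∪
              ((fun f => (inl f : WreathProduct G H X)) '' Γ i)) = ⊤ := by
  set K := Subgroup.closure
      (((fun s => (aS s)⁻¹ * inr s * aS s) '' S_H) ∪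
        ⋃ i : I,
          ((fun g => (aG i g)⁻¹ * coordHom G H (y i) g * aG i g) '' 𝒢 i) ∪
            ((fun f => (inl f : WreathProduct G H X)) '' Γ i)) with hKdef
  have hSK : ∀ s ∈ S_H, (aS s)⁻¹ * inr s * aS s ∈ K := fun s hs =>
    Subgroup.subset_closure (Set.mem_union_left _ ⟨s, hs, rfl⟩)
  have hGK : ∀ i : I, ∀ g ∈ 𝒢 i, (aG i g)⁻¹ * coordHom G H (y i) g * aG i g ∈ K :=
    fun i g hg => Subgroup.subset_closure (Set.mem_union_right _
      (Set.mem_iUnion.mpr ⟨i, Set.mem_union_left _ ⟨g, hg, rfl⟩⟩))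
  have hΓK : ∀ i : I, ∀ f ∈ Γ i, (inl f : WreathProduct G H X) ∈ K :=
    fun i f hf => Subgroup.subset_closure (Set.mem_union_right _
      (Set.mem_iUnion.mpr ⟨i, Set.mem_union_right _ ⟨f, hf, rfl⟩⟩))
  -- Step A: K surjects onto H
  have hsurj : ∀ h : H, ∃ w ∈ K, w.right = h := by
    have hmap : K.map (rightHom (φ := wreathAut G H X)) = ⊤ := by
      rw [eq_top_iff, ← hS (fun s => rightHom (aS s))]
      refine (Subgroup.closure_le _).mpr ?_
      rintro x ⟨s, hs, rfl⟩
      refine ⟨(aS s)⁻¹ * inr s * aS s, hSK s hs, ?_⟩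
      simp [map_mul, map_inv, rightHom_inr]
    intro h
    have : h ∈ K.map (rightHom (φ := wreathAut G H X)) := hmap ▸ Subgroup.mem_top h
    obtain ⟨w, hw, hwr⟩ := this
    exact ⟨w, hw, hwr⟩
  -- one-element transfer along the action
  have htrans : ∀ (z : X) (a : G), (inl (WreathBase.single X z a) : WreathProduct G H X) ∈ K →
      ∀ h : H, ∃ c : G,
        (inl (WreathBase.single X (h • z) (c * a * c⁻¹)) : WreathProduct G H X) ∈ K := by
    intro z a ha h
    obtain ⟨w, hw, hwr⟩ := hsurj h
    subst hwr
    refine ⟨(w.left : X → G) (w.right • z), ?_⟩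
    have := K.mul_mem (K.mul_mem hw ha) (K.inv_mem hw)
    rwa [conj_inl_single] at this
  -- full transfer along the action
  have hfull : ∀ z : X, (∀ a : G, (inl (WreathBase.single X z a) : WreathProduct G H X) ∈ K) →
      ∀ x ∈ MulAction.orbit H z, ∀ g : G,
        (inl (WreathBase.single X x g) : WreathProduct G H X) ∈ K := by
    rintro z hz x ⟨h, rfl⟩ g
    obtain ⟨w, hw, hwr⟩ := hsurj h
    subst hwr
    have := K.mul_mem (K.mul_mem hw
      (hz (((w.left : X → G) (w.right • z))⁻¹ * g * (w.left : X → G) (w.right • z))))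
      (K.inv_mem hw)
    rwa [conj_inl_single'] at this
  -- Step C: all singles at z i
  have hzi : ∀ i : I, ∀ a : G, (inl (WreathBase.single X (z i) a) : WreathProduct G H X) ∈ K := by
    intro i
    set A : Subgroup G := K.comap (coordHom G H (z i)) with hAdef
    have hconj : ∀ x : G, ∀ a ∈ A, x * a * x⁻¹ ∈ A := by
      intro x a ha
      obtain ⟨f, hfΓ, hfz⟩ := hΓ i x
      have hf : (inl f : WreathProduct G H X) ∈ K := hΓK i f hfΓ
      have ha' : (inl (WreathBase.single X (z i) a) : WreathProduct G H X) ∈ K :=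
        Subgroup.mem_comap.mp ha
      have hm := K.mul_mem (K.mul_mem hf ha') (K.inv_mem hf)
      rw [← map_inv, ← map_mul, ← map_mul, base_conj_single, hfz] at hm
      exact Subgroup.mem_comap.mpr hm
    have hgen : ∀ g ∈ 𝒢 i, g ∈ A := by
      intro g hg
      have hu := hGK i g hg
      set w : WreathProduct G H X := (aG i g)⁻¹ with hwdef
      have hu' : w * inl (WreathBase.single X (y i) g) * w⁻¹ ∈ K := by
        rw [hwdef, inv_inv]
        exact hu
      rw [conj_inl_single w (y i) g] at hu'
      set β := (w.left : X → G) (w.right • y i) with hβ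
      obtain ⟨h', hh'⟩ := hz i
      have hh'' : h' • y i = z i := hh'
      obtain ⟨c, hc⟩ := htrans _ _ hu' (h' * w.right⁻¹)
      rw [smul_smul, inv_mul_cancel_right, hh''] at hc
      have hmem : c * (β * g * β⁻¹) * c⁻¹ ∈ A := Subgroup.mem_comap.mpr hc
      have h2 := hconj ((c * β)⁻¹) _ hmem
      rwa [show (c * β)⁻¹ * (c * (β * g * β⁻¹) * c⁻¹) * ((c * β)⁻¹)⁻¹ = g by group] at h2
    have hAtop : A = ⊤ := by
      rw [eq_top_iff, ← h𝒢 i]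
      exact (Subgroup.closure_le A).mpr hgen
    intro a
    have haA : a ∈ A := by rw [hAtop]; exact Subgroup.mem_top a
    exact Subgroup.mem_comap.mp haA
  -- Step D: all singles
  have hsingle : ∀ (x : X) (g : G), (inl (WreathBase.single X x g) : WreathProduct G H X) ∈ K := by
    intro x g
    obtain ⟨i, hi⟩ := hcover x
    obtain ⟨h1, hh1⟩ := hi
    obtain ⟨h2, hh2⟩ := hz i
    have hh1' : h1 • y i = x := hh1
    have hh2' : h2 • y i = z i := hh2
    refine hfull (z i) (hzi i) x ⟨h1 * h2⁻¹, ?_⟩ g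
    show (h1 * h2⁻¹) • z i = x
    rw [← hh2', smul_smul, inv_mul_cancel_right]
    exact hh1'
  -- Step E: the whole base
  have hbase : ∀ f : WreathBase G X, (inl f : WreathProduct G H X) ∈ K :=
    inl_base_mem K hsingle
  -- Step F: everything
  rw [eq_top_iff]
  intro w _
  obtain ⟨wb, hwb, hwr⟩ := hsurj w.right
  have h1 : (inl (w.left * wb.left⁻¹) : WreathProduct G H X) ∈ K := hbase _
  have h2 := K.mul_mem h1 hwb
  have heq : (inl (w.left * wb.left⁻¹) : WreathProduct G H X) * wb = w := by
    have hstep : (inl (w.left * wb.left⁻¹) : WreathProduct G H X) *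
        (inl wb.left * inr wb.right) = inl w.left * inr w.right := by
      rw [← mul_assoc, ← map_mul, inv_mul_cancel_right, hwr]
    rw [inl_left_mul_inr_right, inl_left_mul_inr_right] at hstep
    exact hstep
  rwa [heq] at h2
end
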